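/- arXiv:2603.16999 — 2 statements merged into one kernel-verified Lean document; each statement's English description precedes it below -/
import Mathlib

section
/- Let (H_i, ι) over directed poset I and (K_j, κ) over directed poset J be inductive systems of Hilbert spaces with isometric connecting maps, and let H^ind, K^ind, (H⊗K)^ind denote the Hilbert-space completions of the respective inductive limits (the third over the product poset I × J with connecting maps ι ⊗ κ). Then there is a unitary isomorphism (H⊗K)^ind ≅ H^ind ⊗ K^ind determined on classes of decomposable tensors by [x_i ⊗ y_j, (i,j)] ↦ [x_i, i] ⊗ [y_j, j]. -/
/-!
Both `G` and `W` are spanned densely by vectors indexed by the same pairs of decomposables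
`(x_i, y_j)`: in `G` by `[x_i ⊗ y_j, (i,j)]`, in `W` by `[x_i, i] ⊗ [y_j, j]`. Pushing both pairs
of indices up to a common bound `(k, l)` shows that the two families have the same Gram matrix,
so `Σ cₐ dₐ ↦ Σ cₐ eₐ` is a well-defined isometry between the spans, which extends to a unitary
between the completions. Density of the second span holds because `‖a ⊗ b‖ = ‖a‖ ‖b‖` makes `⊗`
jointly continuous, so `[x_i, i] ⊗ [y_j, j]` approximate every `a ⊗ b`.
-/

open Submodule

section GramMatrix

variable {𝕜 ι G W : Type*} [RCLike 𝕜]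
  [NormedAddCommGroup G] [InnerProductSpace 𝕜 G] [NormedAddCommGroup W] [InnerProductSpace 𝕜 W]

theorem inner_linearCombination_eq_of_inner_eq {d : ι → G} {e : ι → W}
    (hde : ∀ a b, inner 𝕜 (d a) (d b) = inner 𝕜 (e a) (e b)) (v w : ι →₀ 𝕜) :
    inner 𝕜 (Finsupp.linearCombination 𝕜 d v) (Finsupp.linearCombination 𝕜 d w)
      = inner 𝕜 (Finsupp.linearCombination 𝕜 e v) (Finsupp.linearCombination 𝕜 e w) := by
  simp only [Finsupp.linearCombination_apply, Finsupp.sum, sum_inner, inner_sum,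
    inner_smul_left, inner_smul_right, hde]

theorem norm_linearCombination_eq_of_inner_eq {d : ι → G} {e : ι → W}
    (hde : ∀ a b, inner 𝕜 (d a) (d b) = inner 𝕜 (e a) (e b)) (v : ι →₀ 𝕜) :
    ‖Finsupp.linearCombination 𝕜 e v‖ = ‖Finsupp.linearCombination 𝕜 d v‖ := by
  rw [norm_eq_sqrt_re_inner (𝕜 := 𝕜), norm_eq_sqrt_re_inner (𝕜 := 𝕜),
    inner_linearCombination_eq_of_inner_eq hde]

theorem denseRange_linearCombination_iff {V : Type*} [NormedAddCommGroup V]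
    [InnerProductSpace 𝕜 V] {c : ι → V} :
    DenseRange (Finsupp.linearCombination 𝕜 c) ↔ Dense (span 𝕜 (Set.range c) : Set V) := by
  rw [DenseRange, ← LinearMap.coe_range, Finsupp.range_linearCombination]

theorem exists_linearIsometryEquiv_of_inner_eq [CompleteSpace G] [CompleteSpace W]
    {d : ι → G} {e : ι → W} (hde : ∀ a b, inner 𝕜 (d a) (d b) = inner 𝕜 (e a) (e b))
    (hd : Dense (span 𝕜 (Set.range d) : Set G)) (he : Dense (span 𝕜 (Set.range e) : Set W)) :
    ∃ U : G ≃ₗᵢ[𝕜] W, ∀ a, U (d a) = e a := by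
  have hd' := denseRange_linearCombination_iff.mpr hd
  have he' := denseRange_linearCombination_iff.mpr he
  have hnorm := norm_linearCombination_eq_of_inner_eq hde
  refine ⟨(LinearEquiv.refl 𝕜 (ι →₀ 𝕜)).extendOfIsometry _ _ hd' he' hnorm, fun a => ?_⟩
  simpa using
    (LinearEquiv.refl 𝕜 (ι →₀ 𝕜)).extendOfIsometry_eq _ _ hd' he' hnorm (Finsupp.single a 1)

end GramMatrix

section HilbertTensorProduct

variable {𝕜 E F W : Type*} [RCLike 𝕜]
  [NormedAddCommGroup E] [InnerProductSpace 𝕜 E] [NormedAddCommGroup F] [InnerProductSpace 𝕜 F]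
  [NormedAddCommGroup W] [InnerProductSpace 𝕜 W]

theorem norm_apply_apply_eq_of_inner_eq_mul {m : E →ₗ[𝕜] F →ₗ[𝕜] W}
    (hm : ∀ a a' b b', inner 𝕜 (m a b) (m a' b') = inner 𝕜 a a' * inner 𝕜 b b') (a : E) (b : F) :
    ‖m a b‖ = ‖a‖ * ‖b‖ := by
  rw [norm_eq_sqrt_re_inner (𝕜 := 𝕜), hm, inner_self_eq_norm_sq_to_K,
    inner_self_eq_norm_sq_to_K, ← RCLike.ofReal_pow, ← RCLike.ofReal_pow, ← RCLike.ofReal_mul,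
    RCLike.ofReal_re, ← mul_pow, Real.sqrt_sq (by positivity)]

theorem continuous_apply_apply_of_inner_eq_mul {m : E →ₗ[𝕜] F →ₗ[𝕜] W}
    (hm : ∀ a a' b b', inner 𝕜 (m a b) (m a' b') = inner 𝕜 a a' * inner 𝕜 b b') :
    Continuous fun p : E × F => m p.1 p.2 :=
  (m.mkContinuous₂ 1 fun a b => by
    rw [norm_apply_apply_eq_of_inner_eq_mul hm, one_mul]).continuous₂

end HilbertTensorProduct

theorem Submodule.dense_map₂ {𝕜 E F W : Type*} [NontriviallyNormedField 𝕜]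
    [NormedAddCommGroup E] [NormedSpace 𝕜 E] [NormedAddCommGroup F] [NormedSpace 𝕜 F]
    [NormedAddCommGroup W] [NormedSpace 𝕜 W] {m : E →ₗ[𝕜] F →ₗ[𝕜] W}
    (hm : Continuous fun p : E × F => m p.1 p.2) {P : Submodule 𝕜 E} {Q : Submodule 𝕜 F}
    (hP : Dense (P : Set E)) (hQ : Dense (Q : Set F))
    (hspan : Dense (span 𝕜 {w | ∃ a b, w = m a b} : Set W)) :
    Dense (map₂ m P Q : Set W) := by
  have hle : span 𝕜 {w | ∃ a b, w = m a b} ≤ (map₂ m P Q).topologicalClosure :=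
    span_le.mpr <| by
      rintro _ ⟨a, b, rfl⟩
      exact map_mem_closure₂ (f := fun a b => m a b) hm (hP a) (hQ b)
        fun a ha b hb => apply_mem_map₂ m ha hb
  rw [← SetLike.coe_subset_coe, topologicalClosure_coe] at hle
  exact (hspan.mono hle).of_closure

theorem stmt15_general {I J : Type*}
    [PartialOrder I] [IsDirected I (· ≤ ·)]
    [PartialOrder J] [IsDirected J (· ≤ ·)]
    (H : I → Type*) [∀ i, NormedAddCommGroup (H i)] [∀ i, InnerProductSpace ℂ (H i)]
    (K : J → Type*) [∀ j, NormedAddCommGroup (K j)] [∀ j, InnerProductSpace ℂ (K j)]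
    (f : ∀ i i', i ≤ i' → (H i →ₗ[ℂ] H i'))
    (g : ∀ j j', j ≤ j' → (K j →ₗ[ℂ] K j'))
    -- `E`: the completion `H^ind` of the inductive limit of `(H_i, f)`
    {E : Type*} [NormedAddCommGroup E] [InnerProductSpace ℂ E]
    (jH : ∀ i, H i →ₗ[ℂ] E)
    (hjHinner : ∀ i i' (x : H i) (y : H i') (k : I) (h1 : i ≤ k) (h2 : i' ≤ k),
      (inner ℂ (jH i x) (jH i' y) : ℂ) = inner ℂ (f i k h1 x) (f i' k h2 y))
    (hjHdense : Dense (↑(⨆ i, LinearMap.range (jH i)) : Set E))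
    -- `F`: the completion `K^ind` of the inductive limit of `(K_j, g)`
    {F : Type*} [NormedAddCommGroup F] [InnerProductSpace ℂ F]
    (jK : ∀ j, K j →ₗ[ℂ] F)
    (hjKinner : ∀ j j' (x : K j) (y : K j') (l : J) (h1 : j ≤ l) (h2 : j' ≤ l),
      (inner ℂ (jK j x) (jK j' y) : ℂ) = inner ℂ (g j l h1 x) (g j' l h2 y))
    (hjKdense : Dense (↑(⨆ j, LinearMap.range (jK j)) : Set F))
    -- `G`: the completion `(H ⊗ K)^ind` of the inductive limit of the tensor-product system
    {G : Type*} [NormedAddCommGroup G] [InnerProductSpace ℂ G] [CompleteSpace G]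
    (jHK : ∀ i j, H i →ₗ[ℂ] K j →ₗ[ℂ] G)
    (hjHKinner : ∀ i i' j j' (x : H i) (x' : H i') (y : K j) (y' : K j')
        (k : I) (h1 : i ≤ k) (h2 : i' ≤ k) (l : J) (h3 : j ≤ l) (h4 : j' ≤ l),
      (inner ℂ (jHK i j x y) (jHK i' j' x' y') : ℂ)
        = inner ℂ (f i k h1 x) (f i' k h2 x') * inner ℂ (g j l h3 y) (g j' l h4 y'))
    (hjHKdense :
      Dense (↑(Submodule.span ℂ {w : G | ∃ (i : I) (j : J) (x : H i) (y : K j),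
        w = jHK i j x y}) : Set G))
    -- `W`: the Hilbert tensor product `H^ind ⊗ K^ind = E ⊗ F`
    {W : Type*} [NormedAddCommGroup W] [InnerProductSpace ℂ W] [CompleteSpace W]
    (m : E →ₗ[ℂ] F →ₗ[ℂ] W)
    (hm : ∀ (a a' : E) (b b' : F),
      (inner ℂ (m a b) (m a' b') : ℂ) = inner ℂ a a' * inner ℂ b b')
    (hmdense : Dense (↑(Submodule.span ℂ {w : W | ∃ (a : E) (b : F), w = m a b}) : Set W)) :
    ∃ U : G ≃ₗᵢ[ℂ] W, ∀ (i : I) (j : J) (x : H i) (y : K j),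
      U (jHK i j x y) = m (jH i x) (jK j y) := by
  let d : (Σ i, H i) × (Σ j, K j) → G := fun p => jHK p.1.1 p.2.1 p.1.2 p.2.2
  let e : (Σ i, H i) × (Σ j, K j) → W := fun p => m (jH p.1.1 p.1.2) (jK p.2.1 p.2.2)
  have hgram : ∀ a b, inner ℂ (d a) (d b) = inner ℂ (e a) (e b) := by
    rintro ⟨⟨i, x⟩, ⟨j, y⟩⟩ ⟨⟨i', x'⟩, ⟨j', y'⟩⟩
    obtain ⟨k, hik, hi'k⟩ := directed_of (· ≤ ·) i i'
    obtain ⟨l, hjl, hj'l⟩ := directed_of (· ≤ ·) j j'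
    simp only [d, e, hjHKinner i i' j j' x x' y y' k hik hi'k l hjl hj'l, hm,
      hjHinner i i' x x' k hik hi'k, hjKinner j j' y y' l hjl hj'l]
  have hd : Dense (span ℂ (Set.range d) : Set G) := by
    convert hjHKdense using 4
    ext w
    simp only [d, Set.mem_range, Prod.exists, Sigma.exists, Set.mem_ofPred_eq, eq_comm]
    exact ⟨fun ⟨i, x, j, y, hw⟩ => ⟨i, j, x, y, hw⟩, fun ⟨i, j, x, y, hw⟩ => ⟨i, x, j, y, hw⟩⟩
  have he : Dense (span ℂ (Set.range e) : Set W) := by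
    refine (Submodule.dense_map₂ (continuous_apply_apply_of_inner_eq_mul hm) hjHdense hjKdense
      hmdense).mono ?_
    simp only [iSup_eq_span, map₂_span_span, LinearMap.coe_range, SetLike.coe_subset_coe]
    refine span_mono ?_
    rintro _ ⟨_, ⟨_, ⟨i, rfl⟩, ⟨x, rfl⟩⟩, _, ⟨_, ⟨j, rfl⟩, ⟨y, rfl⟩⟩, rfl⟩
    exact ⟨(⟨i, x⟩, ⟨j, y⟩), rfl⟩
  obtain ⟨U, hU⟩ := exists_linearIsometryEquiv_of_inner_eq hgram hd he
  exact ⟨U, fun i j x y => hU (⟨i, x⟩, ⟨j, y⟩)⟩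

/-- Let `(H_i, f)` and `(K_j, g)` be inductive systems of Hilbert spaces with
isometric connecting maps over directed posets `I`, `J`.  Let `E` (resp. `F`) be the Hilbert
space completion of the inductive limit of `(H_i)` (resp. `(K_j)`), presented by compatible
maps `jH i : H i → E` (resp. `jK j : K j → F`) with the induced inner products and dense joint
range; let `G` be the completion of the inductive limit of the product system over `I × J`
formed by the Hilbert tensor products `H i ⊗ K j`, presented on decomposable tensors by the
bilinear maps `jHK i j : H i → K j → G`; and let `W` together with the bilinear map
`m : E → F → W` be the Hilbert tensor product `E ⊗ F` (inner products of decomposables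
multiply, decomposables span a dense subspace).  Then there is a unitary isomorphism
`(H ⊗ K)^ind ≅ H^ind ⊗ K^ind`, i.e. `G ≅ W`, determined on classes of decomposable tensors by
`[x_i ⊗ y_j, (i,j)] ↦ [x_i, i] ⊗ [y_j, j]`. -/
theorem stmt15 {I J : Type*}
    [PartialOrder I] [IsDirected I (· ≤ ·)] [Nonempty I]
    [PartialOrder J] [IsDirected J (· ≤ ·)] [Nonempty J]
    (H : I → Type*) [∀ i, NormedAddCommGroup (H i)] [∀ i, InnerProductSpace ℂ (H i)]
    (K : J → Type*) [∀ j, NormedAddCommGroup (K j)] [∀ j, InnerProductSpace ℂ (K j)]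
    (f : ∀ i i', i ≤ i' → (H i →ₗ[ℂ] H i'))
    (g : ∀ j j', j ≤ j' → (K j →ₗ[ℂ] K j'))
    (hfiso : ∀ i i' (h : i ≤ i') (x y : H i),
      (inner ℂ (f i i' h x) (f i i' h y) : ℂ) = inner ℂ x y)
    (hgiso : ∀ j j' (h : j ≤ j') (x y : K j),
      (inner ℂ (g j j' h x) (g j j' h y) : ℂ) = inner ℂ x y)
    -- `E`: the completion `H^ind` of the inductive limit of `(H_i, f)`
    {E : Type*} [NormedAddCommGroup E] [InnerProductSpace ℂ E] [CompleteSpace E]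
    (jH : ∀ i, H i →ₗ[ℂ] E)
    (hjHcomp : ∀ i i' (h : i ≤ i') (x : H i), jH i' (f i i' h x) = jH i x)
    (hjHinner : ∀ i i' (x : H i) (y : H i') (k : I) (h1 : i ≤ k) (h2 : i' ≤ k),
      (inner ℂ (jH i x) (jH i' y) : ℂ) = inner ℂ (f i k h1 x) (f i' k h2 y))
    (hjHdense : Dense (↑(⨆ i, LinearMap.range (jH i)) : Set E))
    -- `F`: the completion `K^ind` of the inductive limit of `(K_j, g)`
    {F : Type*} [NormedAddCommGroup F] [InnerProductSpace ℂ F] [CompleteSpace F]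
    (jK : ∀ j, K j →ₗ[ℂ] F)
    (hjKcomp : ∀ j j' (h : j ≤ j') (y : K j), jK j' (g j j' h y) = jK j y)
    (hjKinner : ∀ j j' (x : K j) (y : K j') (l : J) (h1 : j ≤ l) (h2 : j' ≤ l),
      (inner ℂ (jK j x) (jK j' y) : ℂ) = inner ℂ (g j l h1 x) (g j' l h2 y))
    (hjKdense : Dense (↑(⨆ j, LinearMap.range (jK j)) : Set F))
    -- `G`: the completion `(H ⊗ K)^ind` of the inductive limit of the tensor-product system
    {G : Type*} [NormedAddCommGroup G] [InnerProductSpace ℂ G] [CompleteSpace G]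
    (jHK : ∀ i j, H i →ₗ[ℂ] K j →ₗ[ℂ] G)
    (hjHKcomp : ∀ i i' j j' (hi : i ≤ i') (hj : j ≤ j') (x : H i) (y : K j),
      jHK i' j' (f i i' hi x) (g j j' hj y) = jHK i j x y)
    (hjHKinner : ∀ i i' j j' (x : H i) (x' : H i') (y : K j) (y' : K j')
        (k : I) (h1 : i ≤ k) (h2 : i' ≤ k) (l : J) (h3 : j ≤ l) (h4 : j' ≤ l),
      (inner ℂ (jHK i j x y) (jHK i' j' x' y') : ℂ)
        = inner ℂ (f i k h1 x) (f i' k h2 x') * inner ℂ (g j l h3 y) (g j' l h4 y'))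
    (hjHKdense :
      Dense (↑(Submodule.span ℂ {w : G | ∃ (i : I) (j : J) (x : H i) (y : K j),
        w = jHK i j x y}) : Set G))
    -- `W`: the Hilbert tensor product `H^ind ⊗ K^ind = E ⊗ F`
    {W : Type*} [NormedAddCommGroup W] [InnerProductSpace ℂ W] [CompleteSpace W]
    (m : E →ₗ[ℂ] F →ₗ[ℂ] W)
    (hm : ∀ (a a' : E) (b b' : F),
      (inner ℂ (m a b) (m a' b') : ℂ) = inner ℂ a a' * inner ℂ b b')
    (hmdense : Dense (↑(Submodule.span ℂ {w : W | ∃ (a : E) (b : F), w = m a b}) : Set W)) :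
    ∃ U : G ≃ₗᵢ[ℂ] W, ∀ (i : I) (j : J) (x : H i) (y : K j),
      U (jHK i j x y) = m (jH i x) (jK j y) :=
  stmt15_general H K f g jH hjHinner hjHdense jK hjKinner hjKdense jHK hjHKinner hjHKdense m hm
    hmdense
end

section
/- Let D₁, D₂ be complex inner product spaces with anti-linear maps P₁ : D₁ → D₁′ and P₂ : D₂ → D₂′ satisfying reality and positive semidefiniteness as sesquilinear forms. Define P : D₁ ⊗ D₂ → (D₁ ⊗ D₂)′ on decomposable tensors by P(φ₁⊗φ₂)[ψ₁⊗ψ₂] = P₁(φ₁)[ψ₁] · P₂(φ₂)[ψ₂] and extend (anti-)linearly. Then ker P = ker P₁ ⊗ D₂ + D₁ ⊗ ker P₂, and there is an isometric isomorphism between the inner-product quotient (D₁⊗D₂)/ker P (with form induced by P) and the tensor product (D₁/ker P₁) ⊗ (D₂/ker P₂) (with the product of the induced forms), given on classes of decomposable tensors by [ψ₁⊗ψ₂] ↦ [ψ₁]⊗[ψ₂]. -/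
/-!
P₁ and P₂ descend to genuine inner products on `D₁ ⧸ ker P₁` and `D₂ ⧸ ker P₂`: by Cauchy–Schwarz a
positive semidefinite Hermitian form with `B x x = 0` has `B x = 0`. The product of these is the
inner product on the algebraic tensor product of two inner product spaces, which is positive
definite. Pulling it back along `q = [·] ⊗ [·] : D₁ ⊗ D₂ → (D₁ ⧸ ker P₁) ⊗ (D₂ ⧸ ker P₂)` gives `P`,
so `ker P = ker q`; right exactness of `⊗` identifies `ker q` with `ker P₁ ⊗ D₂ + D₁ ⊗ ker P₂`, and
`q` induces the isometric isomorphism.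
-/

open scoped TensorProduct
open ComplexOrder

/-- The kernel `{φ : P φ = 0}` of an anti-linear map `P : D → D′` into the algebraic dual,
as a submodule of `D`. -/
def antiKer {D : Type*} [AddCommGroup D] [Module ℂ D]
    (P : D → (D →ₗ[ℂ] ℂ))
    (hadd : ∀ φ ψ : D, P (φ + ψ) = P φ + P ψ)
    (hsmul : ∀ (c : ℂ) (φ : D), P (c • φ) = starRingEnd ℂ c • P φ) : Submodule ℂ D where
  carrier := {φ | P φ = 0}
  add_mem' := fun {a b} ha hb => by
    simp only [Set.mem_setOf_eq] at *
    rw [hadd, ha, hb, add_zero]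
  zero_mem' := by
    have h := hsmul 0 0
    rw [zero_smul] at h
    simpa using h
  smul_mem' := fun c a ha => by
    simp only [Set.mem_setOf_eq] at *
    rw [hsmul, ha, smul_zero]

namespace LinearMap

variable {D : Type*} [AddCommGroup D] [Module ℂ D]

def ofAntilinear (P : D → D →ₗ[ℂ] ℂ) (hadd : ∀ φ ψ : D, P (φ + ψ) = P φ + P ψ)
    (hsmul : ∀ (c : ℂ) (φ : D), P (c • φ) = starRingEnd ℂ c • P φ) :
    D →ₗ⋆[ℂ] D →ₗ[ℂ] ℂ where
  toFun := P
  map_add' := hadd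
  map_smul' := hsmul

theorem ker_ofAntilinear (P : D → D →ₗ[ℂ] ℂ) (hadd : ∀ φ ψ : D, P (φ + ψ) = P φ + P ψ)
    (hsmul : ∀ (c : ℂ) (φ : D), P (c • φ) = starRingEnd ℂ c • P φ) :
    ker (ofAntilinear P hadd hsmul) = antiKer P hadd hsmul := rfl

theorem isPosSemidef_ofAntilinear (P : D → D →ₗ[ℂ] ℂ)
    (hadd : ∀ φ ψ : D, P (φ + ψ) = P φ + P ψ)
    (hsmul : ∀ (c : ℂ) (φ : D), P (c • φ) = starRingEnd ℂ c • P φ)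
    (hreal : ∀ φ ψ : D, P φ ψ = starRingEnd ℂ (P ψ φ)) (hpos : ∀ ψ : D, 0 ≤ P ψ ψ) :
    (ofAntilinear P hadd hsmul).IsPosSemidef where
  isSymm := ⟨fun φ ψ => (hreal ψ φ).symm⟩
  isNonneg := ⟨hpos⟩

variable {B : D →ₗ⋆[ℂ] D →ₗ[ℂ] ℂ}

def quotKerForm (hB : B.IsRefl) : (D ⧸ ker B) →ₗ⋆[ℂ] (D ⧸ ker B) →ₗ[ℂ] ℂ :=
  ((ker B).liftQ ((ker B).liftQ B le_rfl).flip fun y hy => by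
    ext x
    exact hB y x (by simp [mem_ker.mp hy])).flip

namespace IsPosSemidef

variable (hB : B.IsPosSemidef)
include hB

abbrev toPreInnerProductCore : PreInnerProductSpace.Core ℂ D where
  inner x y := B x y
  conj_inner_symm x y := hB.isSymm.eq y x
  re_inner_nonneg x := (Complex.nonneg_iff.mp (hB.isNonneg.nonneg x)).1
  add_left x y z := by simp
  smul_left x y r := by simp

theorem eq_zero_of_apply_self_eq_zero {x : D} (hx : B x x = 0) : B x = 0 := by
  let := hB.toPreInnerProductCore
  ext y
  have h := InnerProductSpace.Core.inner_mul_inner_self_le (𝕜 := ℂ) x y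
  rw [InnerProductSpace.Core.norm_inner_symm y x] at h
  change ‖B x y‖ * ‖B x y‖ ≤ (B x x).re * (B y y).re at h
  rw [hx, Complex.zero_re, zero_mul] at h
  exact norm_eq_zero.mp (mul_self_eq_zero.mp (le_antisymm h (mul_self_nonneg _)))

theorem quotKerForm : (quotKerForm hB.isSymm.isRefl).IsPosSemidef where
  isSymm := ⟨fun u v => by
    induction u using Submodule.Quotient.induction_on
    induction v using Submodule.Quotient.induction_on
    exact hB.isSymm.eq _ _⟩
  isNonneg := ⟨fun u => by
    induction u using Submodule.Quotient.induction_on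
    exact hB.isNonneg.nonneg _⟩

abbrev toQuotKerInnerProductCore : InnerProductSpace.Core ℂ (D ⧸ ker B) where
  __ := hB.quotKerForm.toPreInnerProductCore
  definite u hu := by
    induction u using Submodule.Quotient.induction_on with
    | H x => exact (Submodule.Quotient.mk_eq_zero _).mpr (hB.eq_zero_of_apply_self_eq_zero hu)

end IsPosSemidef

theorem exists_definite_tensor_form_quotKer {E F : Type*} [AddCommGroup E] [Module ℂ E]
    [AddCommGroup F] [Module ℂ F] {B₁ : E →ₗ⋆[ℂ] E →ₗ[ℂ] ℂ} {B₂ : F →ₗ⋆[ℂ] F →ₗ[ℂ] ℂ}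
    (hB₁ : B₁.IsPosSemidef) (hB₂ : B₂.IsPosSemidef) :
    ∃ C : (E ⧸ ker B₁) ⊗[ℂ] (F ⧸ ker B₂) →ₗ⋆[ℂ] (E ⧸ ker B₁) ⊗[ℂ] (F ⧸ ker B₂) →ₗ[ℂ] ℂ,
      (∀ (x x' : E) (y y' : F),
        C (Submodule.Quotient.mk x ⊗ₜ Submodule.Quotient.mk y)
          (Submodule.Quotient.mk x' ⊗ₜ Submodule.Quotient.mk y') = B₁ x x' * B₂ y y') ∧
      ∀ u, C u u = 0 → u = 0 := by
  let : NormedAddCommGroup (E ⧸ ker B₁) := hB₁.toQuotKerInnerProductCore.toNormedAddCommGroup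
  let : InnerProductSpace ℂ (E ⧸ ker B₁) := .ofCore hB₁.toQuotKerInnerProductCore.toCore
  let : NormedAddCommGroup (F ⧸ ker B₂) := hB₂.toQuotKerInnerProductCore.toNormedAddCommGroup
  let : InnerProductSpace ℂ (F ⧸ ker B₂) := .ofCore hB₂.toQuotKerInnerProductCore.toCore
  exact ⟨innerₛₗ ℂ, fun _ _ _ _ => TensorProduct.inner_tmul ℂ _ _ _ _,
    fun _ h => by simpa only [coe_innerₛₗ_apply, inner_self_eq_zero] using h⟩

theorem ker_eq_ker_of_apply_eq {R V W : Type*} [CommSemiring R] {σ : R →+* R}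
    [AddCommMonoid V] [Module R V] [AddCommMonoid W] [Module R W]
    {C : V →ₛₗ[σ] V →ₗ[R] R} (hC : ∀ u, C u u = 0 → u = 0)
    {B : W →ₛₗ[σ] W →ₗ[R] R} {Q : W →ₗ[R] V} (h : ∀ s t, B s t = C (Q s) (Q t)) :
    ker B = ker Q := by
  ext s
  simp only [mem_ker]
  constructor
  · intro hs
    exact hC _ (by rw [← h, hs, zero_apply])
  · intro hs
    ext t
    rw [h, hs, map_zero, zero_apply, zero_apply]

end LinearMap

theorem TensorProduct.ker_map_mkQ {R M N : Type*} [CommRing R] [AddCommGroup M] [Module R M]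
    [AddCommGroup N] [Module R N] (m : Submodule R M) (n : Submodule R N) :
    LinearMap.ker (map m.mkQ n.mkQ) = Submodule.span R
      ({t | ∃ (x : M) (y : N), x ∈ m ∧ t = x ⊗ₜ y} ∪
        {t | ∃ (x : M) (y : N), y ∈ n ∧ t = x ⊗ₜ y}) := by
  rw [map_ker (LinearMap.exact_subtype_mkQ m) m.mkQ_surjective (LinearMap.exact_subtype_mkQ n)
    n.mkQ_surjective, LinearMap.lTensor_def, LinearMap.rTensor_def, range_map_eq_span_tmul,
    range_map_eq_span_tmul, Submodule.span_union, sup_comm]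
  congr 2 <;> ext t <;> simp [eq_comm]

/-- Let `P₁`, `P₂` be anti-linear maps on complex inner product spaces `D₁`,
`D₂` with reality and positivity, and let `P` on `D₁ ⊗ D₂` be their (anti-linearly extended)
product, `P(φ₁⊗φ₂)[ψ₁⊗ψ₂] = P₁(φ₁)[ψ₁]·P₂(φ₂)[ψ₂]`.  Then
`ker P = ker P₁ ⊗ D₂ + D₁ ⊗ ker P₂`, and the quotient `(D₁⊗D₂)/ker P` with the form induced by
`P` is isometrically isomorphic to `(D₁/ker P₁) ⊗ (D₂/ker P₂)` with the product of the induced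
forms, via `[ψ₁⊗ψ₂] ↦ [ψ₁]⊗[ψ₂]`. -/
theorem stmt18 {D₁ D₂ : Type*}
    [NormedAddCommGroup D₁] [InnerProductSpace ℂ D₁]
    [NormedAddCommGroup D₂] [InnerProductSpace ℂ D₂]
    (P₁ : D₁ → (D₁ →ₗ[ℂ] ℂ)) (P₂ : D₂ → (D₂ →ₗ[ℂ] ℂ))
    (h₁add : ∀ φ ψ : D₁, P₁ (φ + ψ) = P₁ φ + P₁ ψ)
    (h₁smul : ∀ (c : ℂ) (φ : D₁), P₁ (c • φ) = starRingEnd ℂ c • P₁ φ)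
    (h₁real : ∀ φ ψ : D₁, P₁ φ ψ = starRingEnd ℂ (P₁ ψ φ))
    (h₁pos : ∀ ψ : D₁, 0 ≤ P₁ ψ ψ)
    (h₂add : ∀ φ ψ : D₂, P₂ (φ + ψ) = P₂ φ + P₂ ψ)
    (h₂smul : ∀ (c : ℂ) (φ : D₂), P₂ (c • φ) = starRingEnd ℂ c • P₂ φ)
    (h₂real : ∀ φ ψ : D₂, P₂ φ ψ = starRingEnd ℂ (P₂ ψ φ))
    (h₂pos : ∀ ψ : D₂, 0 ≤ P₂ ψ ψ)
    (P : (D₁ ⊗[ℂ] D₂) → ((D₁ ⊗[ℂ] D₂) →ₗ[ℂ] ℂ))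
    (hadd : ∀ φ ψ : D₁ ⊗[ℂ] D₂, P (φ + ψ) = P φ + P ψ)
    (hsmul : ∀ (c : ℂ) (φ : D₁ ⊗[ℂ] D₂), P (c • φ) = starRingEnd ℂ c • P φ)
    (hdec : ∀ (φ₁ ψ₁ : D₁) (φ₂ ψ₂ : D₂),
      P (φ₁ ⊗ₜ[ℂ] φ₂) (ψ₁ ⊗ₜ[ℂ] ψ₂) = P₁ φ₁ ψ₁ * P₂ φ₂ ψ₂) :
    -- ker P = ker P₁ ⊗ D₂ + D₁ ⊗ ker P₂
    antiKer P hadd hsmul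
      = Submodule.span ℂ
          ({t : D₁ ⊗[ℂ] D₂ | ∃ (x : D₁) (y : D₂), P₁ x = 0 ∧ t = x ⊗ₜ[ℂ] y} ∪
           {t : D₁ ⊗[ℂ] D₂ | ∃ (x : D₁) (y : D₂), P₂ y = 0 ∧ t = x ⊗ₜ[ℂ] y}) ∧
    -- the quotient by ker P is isometrically isomorphic to the tensor product of quotients
    ∃ e : ((D₁ ⊗[ℂ] D₂) ⧸ antiKer P hadd hsmul) ≃ₗ[ℂ]
        ((D₁ ⧸ antiKer P₁ h₁add h₁smul) ⊗[ℂ] (D₂ ⧸ antiKer P₂ h₂add h₂smul)),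
      (∀ (x : D₁) (y : D₂),
        e (Submodule.Quotient.mk (x ⊗ₜ[ℂ] y))
          = Submodule.Quotient.mk x ⊗ₜ[ℂ] Submodule.Quotient.mk y) ∧
      ∃ Bq : ((D₁ ⧸ antiKer P₁ h₁add h₁smul) ⊗[ℂ] (D₂ ⧸ antiKer P₂ h₂add h₂smul)) →
          ((D₁ ⧸ antiKer P₁ h₁add h₁smul) ⊗[ℂ] (D₂ ⧸ antiKer P₂ h₂add h₂smul)) → ℂ,
        (∀ (x x' : D₁) (y y' : D₂),
          Bq (Submodule.Quotient.mk x ⊗ₜ[ℂ] Submodule.Quotient.mk y)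
             (Submodule.Quotient.mk x' ⊗ₜ[ℂ] Submodule.Quotient.mk y')
            = P₁ x x' * P₂ y y') ∧
        (∀ s t : D₁ ⊗[ℂ] D₂,
          Bq (e (Submodule.Quotient.mk s)) (e (Submodule.Quotient.mk t)) = P s t) := by
  set B₁ := LinearMap.ofAntilinear P₁ h₁add h₁smul
  set B₂ := LinearMap.ofAntilinear P₂ h₂add h₂smul
  obtain ⟨C, hC_tmul, hC_definite⟩ := LinearMap.exists_definite_tensor_form_quotKer
    (LinearMap.isPosSemidef_ofAntilinear P₁ h₁add h₁smul h₁real h₁pos)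
    (LinearMap.isPosSemidef_ofAntilinear P₂ h₂add h₂smul h₂real h₂pos)
  -- `antiKer Pᵢ …` is definitionally `ker Bᵢ`, so the quotients of the statement are those above.
  set Q := TensorProduct.map (LinearMap.ker B₁).mkQ (LinearMap.ker B₂).mkQ
  have hPC : ∀ s t, P s t = C (Q s) (Q t) := by
    have : LinearMap.ofAntilinear P hadd hsmul = (C ∘ₛₗ Q).compl₂ Q :=
      TensorProduct.ext' fun x y => TensorProduct.ext' fun x' y' =>
        (hdec x x' y y').trans (hC_tmul x x' y y').symm
    exact fun s t => LinearMap.congr_fun₂ this s t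
  have hker : antiKer P hadd hsmul = LinearMap.ker Q := by
    rw [← LinearMap.ker_ofAntilinear]
    exact LinearMap.ker_eq_ker_of_apply_eq hC_definite hPC
  refine ⟨hker.trans (TensorProduct.ker_map_mkQ _ _),
    (Submodule.quotEquivOfEq _ _ hker).trans (Q.quotKerEquivOfSurjective
      (TensorProduct.map_surjective (Submodule.mkQ_surjective _) (Submodule.mkQ_surjective _))),
    fun _ _ => rfl, fun u v => C u v, hC_tmul, fun s t => (hPC s t).symm⟩
end
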